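/- arXiv:2512.14221 — 2 statements merged into one kernel-verified Lean document; each statement's English description precedes it below -/
import Mathlib

section
/- Let d, n ≥ 1, α ∈ (0,1), and let s : X_NA × ℝ → ℝ be measurable. On a common probability space, let (X̂^1,Y^1), …, (X̂^n,Y^n) be i.i.d. random pairs with law Q on ℝ^d × ℝ, and let (X^{n+1}, M^{n+1}, Y^{n+1}), taking values in ℝ^d × {0,1}^d × ℝ, be independent of them. Fix m ∈ {0,1}^d with P(M^{n+1} = m) > 0. Let P*_m denote the conditional law of (mask(X^{n+1}, m), Y^{n+1}) given the event {M^{n+1} = m}, and let Q*_m denote the law of (mask(X̂^1, m), Y^1); assume P*_m is absolutely continuous with respect to Q*_m, with Radon–Nikodym density ω_m : X_NA × ℝ → [0,∞). For i ≤ n set S^i_m := s(mask(X̂^i, m), Y^i) and ω^i := ω_m(mask(X̂^i, m), Y^i), and for (x̃, y) ∈ X_NA × ℝ define the weights W^i(x̃,y) := ω^i / (Σ_{j=1}^n ω^j + ω_m(x̃,y)) for i ≤ n and W^{n+1}(x̃,y) := ω_m(x̃,y) / (Σ_{j=1}^n ω^j + ω_m(x̃,y)) (with the convention that the weighted quantile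 below is +∞ when the denominator is 0). Define the weighted split conformal prediction set Ĉ(x̃) := { y ∈ ℝ : s(x̃, y) ≤ Quantile_{1−α}( Σ_{i=1}^n W^i(x̃,y) δ_{S^i_m} + W^{n+1}(x̃,y) δ_{+∞} ) }. Then P( Y^{n+1} ∈ Ĉ(mask(X^{n+1}, M^{n+1})) | M^{n+1} = m ) ≥ 1 − α. -/
open MeasureTheory ProbabilityTheory
open scoped ENNReal

universe u

/-- Measurable space structure on `Option α`, via the identification with `α ⊕ PUnit`. -/
instance optionMeasurableSpace {α : Type u} [MeasurableSpace α] : MeasurableSpace (Option α) :=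
  MeasurableSpace.comap (Equiv.optionEquivSumPUnit.{0, u} α) inferInstance

/-- The `β`-quantile of the discrete distribution `∑ i, w i · δ_{v i}` on `ℝ ∪ {+∞}`:
`inf { z ∈ ℝ : ∑_{i : v i ≤ z} w i ≥ β }`, with `inf ∅ = +∞`. -/
noncomputable def wQuantile {ι : Type*} [Fintype ι] (β : ℝ) (w : ι → ℝ) (v : ι → EReal) : EReal :=
  sInf {z : EReal | ∃ r : ℝ, z = (r : EReal) ∧
    β ≤ ∑ i ∈ Finset.univ.filter (fun i => v i ≤ (r : EReal)), w i}

/-- Total variation distance between two measures. -/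
noncomputable def tvDist {Z : Type*} [MeasurableSpace Z] (P Q : Measure Z) : ℝ :=
  ⨆ A : {A : Set Z // MeasurableSet A}, |(P A.1).toReal - (Q A.1).toReal|

/-- The mask operator: coordinate `j` is `NA` (i.e. `none`) if `m j = true`, else `x j`. -/
def maskOp {d : ℕ} (x : Fin d → ℝ) (m : Fin d → Bool) : Fin d → Option ℝ :=
  fun j => if m j then none else some (x j)

/-- The `β`-quantile of `(∑_{i=1}^n δ_{sc i} + δ_{+∞})/(n+1)`. -/
noncomputable def splitQuantile {n : ℕ} (β : ℝ) (sc : Fin n → ℝ) : EReal :=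
  wQuantile β (fun _ : Option (Fin n) => 1 / (n + 1 : ℝ))
    (fun i => i.elim (⊤ : EReal) (fun j => ((sc j : ℝ) : EReal)))

/-!
Conditionally on `M^{n+1} = m`, the masked test pair is independent of the masked calibration
pairs and has law `ω_m · Q*_m`, so the `n + 1` masked pairs `z` have joint law
`ω_m(z_{n+1}) · (Q*_m)^{⊗(n+1)}`. Replacing the atom at `+∞` by the test score only lowers the
quantile, and the resulting oracle quantile is a symmetric function of the `n + 1` pairs. By
exchangeability of `(Q*_m)^{⊗(n+1)}`, the miscoverage probability is then `1 / (n + 1)` times the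
expected total weight `∑_i ω_m(z_i)` of the pairs scoring above the oracle quantile. By definition
of the quantile this weight is at most `α ∑_i ω_m(z_i)`, whose expectation is `α (n + 1)`.
-/

section WeightedQuantile

variable {ι : Type*} [Fintype ι]

lemma wQuantile_mono {β : ℝ} {w : ι → ℝ} (hw : ∀ i, 0 ≤ w i) {v v' : ι → EReal}
    (h : ∀ i, v i ≤ v' i) : wQuantile β w v ≤ wQuantile β w v' := by
  refine sInf_le_sInf ?_
  rintro z ⟨r, rfl, hr⟩
  refine ⟨r, rfl, hr.trans (Finset.sum_le_sum_of_subset_of_nonneg ?_ fun i _ _ => hw i)⟩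
  intro i hi
  simp only [Finset.mem_filter, Finset.mem_univ, true_and] at hi ⊢
  exact (h i).trans hi

lemma wQuantile_comp_perm (β : ℝ) (w : ι → ℝ) (v : ι → EReal) (σ : Equiv.Perm ι) :
    wQuantile β (w ∘ σ) (v ∘ σ) = wQuantile β w v := by
  have hsum : ∀ r : ℝ, ∑ i ∈ Finset.univ.filter (fun i => v (σ i) ≤ r), w (σ i)
      = ∑ i ∈ Finset.univ.filter (fun i => v i ≤ r), w i := fun r =>
    Finset.sum_equiv σ (by simp) fun _ _ => rfl
  simp only [wQuantile, Function.comp_apply, hsum]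

lemma sum_filter_wQuantile_lt_le {β : ℝ} {w : ι → ℝ} (hw : ∀ i, 0 ≤ w i)
    (hβ : β ≤ ∑ i, w i) (v : ι → EReal) :
    ∑ i ∈ Finset.univ.filter (fun i => wQuantile β w v < v i), w i ≤ ∑ i, w i - β := by
  classical
  set q := wQuantile β w v
  rcases (Finset.univ.filter fun i => q < v i).eq_empty_or_nonempty with hempty | hne
  · rw [hempty, Finset.sum_empty]
    linarith
  -- some admissible level `r` lies strictly below every score exceeding `q`
  obtain ⟨j, hj, hjmin⟩ := Finset.exists_min_image _ v hne
  obtain ⟨_, ⟨r, rfl, hr⟩, hrj⟩ := sInf_lt_iff.1 (Finset.mem_filter.1 hj).2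
  have hsub : Finset.univ.filter (fun i => q < v i) ⊆ Finset.univ.filter (fun i => ¬v i ≤ r) :=
    fun i hi => Finset.mem_filter.2
      ⟨Finset.mem_univ i, fun hir => (hrj.trans_le (hjmin i hi)).not_ge hir⟩
  calc ∑ i ∈ Finset.univ.filter (fun i => q < v i), w i
      ≤ ∑ i ∈ Finset.univ.filter (fun i => ¬v i ≤ r), w i :=
        Finset.sum_le_sum_of_subset_of_nonneg hsub fun i _ _ => hw i
    _ = ∑ i, w i - ∑ i ∈ Finset.univ.filter (fun i => v i ≤ r), w i := by
        rw [← Finset.sum_filter_add_sum_filter_not Finset.univ (fun i => v i ≤ r)]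
        ring
    _ ≤ ∑ i, w i - β := by linarith

lemma sum_filter_wQuantile_div_lt_le {β : ℝ} (hβ : β ≤ 1) {w : ι → ℝ} (hw : ∀ i, 0 ≤ w i)
    {D : ℝ} (hD : ∑ i, w i = D) (v : ι → EReal) :
    ∑ i ∈ Finset.univ.filter (fun i => wQuantile β (fun j => w j / D) v < v i), w i
      ≤ (1 - β) * D := by
  rcases (hD ▸ Finset.sum_nonneg fun i _ => hw i : 0 ≤ D).eq_or_lt with hD0 | hDpos
  · have hzero : ∀ i, w i = 0 := fun i =>
      (Finset.sum_eq_zero_iff_of_nonneg fun i _ => hw i).1 (hD.trans hD0.symm) i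
        (Finset.mem_univ i)
    simp [hzero, ← hD0]
  have hnorm := sum_filter_wQuantile_lt_le (β := β) (fun i => div_nonneg (hw i) hDpos.le)
    (by rwa [← Finset.sum_div, hD, div_self hDpos.ne']) v
  rwa [← Finset.sum_div, ← Finset.sum_div, hD, div_self hDpos.ne', div_le_iff₀ hDpos] at hnorm

lemma wQuantile_eq_iInf_rat (β : ℝ) {w : ι → ℝ} (hw : ∀ i, 0 ≤ w i) (v : ι → EReal) :
    wQuantile β w v = ⨅ q : ℚ,
      if β ≤ ∑ i ∈ Finset.univ.filter (fun i => v i ≤ (q : ℝ)), w i then ((q : ℝ) : EReal)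
      else ⊤ := by
  refine le_antisymm (le_iInf fun q => ?_) (le_sInf ?_)
  · split_ifs with h
    · exact sInf_le ⟨q, rfl, h⟩
    · exact le_top
  rintro _ ⟨r, rfl, hr⟩
  refine le_of_forall_gt fun c hc => ?_
  obtain ⟨q, hrq, hqc⟩ := EReal.exists_rat_btwn_of_lt hc
  have hq : β ≤ ∑ i ∈ Finset.univ.filter (fun i => v i ≤ (q : ℝ)), w i := by
    refine hr.trans (Finset.sum_le_sum_of_subset_of_nonneg (fun i hi => ?_) fun i _ _ => hw i)
    simp only [Finset.mem_filter, Finset.mem_univ, true_and] at hi ⊢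
    exact hi.trans hrq.le
  exact (iInf_le_of_le q (by rw [if_pos hq])).trans_lt hqc

lemma Measurable.wQuantile {γ : Type*} [MeasurableSpace γ] (β : ℝ) {w : γ → ι → ℝ}
    {v : γ → ι → EReal} (hw : ∀ i, Measurable fun g => w g i) (hw0 : ∀ g i, 0 ≤ w g i)
    (hv : ∀ i, Measurable fun g => v g i) :
    Measurable fun g => wQuantile β (w g) (v g) := by
  classical
  simp_rw [wQuantile_eq_iInf_rat β (hw0 _), Finset.sum_filter]
  refine Measurable.iInf fun q => Measurable.ite ?_ measurable_const measurable_const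
  exact measurableSet_le measurable_const <| Finset.measurable_sum _ fun i _ =>
    Measurable.ite (measurableSet_le (hv i) measurable_const) (hw i) measurable_const

end WeightedQuantile

section WeightedConformal

variable {Z ι : Type*} [Fintype ι]

/-- The weights `W^i` of the paper, for the sample `z : Option ι → Z` whose test point is
`z none`. When all `w (z o)` vanish, `x / 0 = 0` makes every weight `0`, so that for `β > 0` the
weighted quantile is `⊤`, as in the paper's convention. -/
noncomputable def conformalWeights (w : Z → ℝ) (z : Option ι → Z) (o : Option ι) : ℝ :=
  w (z o) / ∑ o', w (z o')

noncomputable def conformalQuantile (β : ℝ) (w s : Z → ℝ) (z : Option ι → Z) : EReal :=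
  wQuantile β (conformalWeights w z) fun o => o.elim ⊤ fun j => (s (z (some j)) : EReal)

noncomputable def oracleQuantile (β : ℝ) (w s : Z → ℝ) (z : Option ι → Z) : EReal :=
  wQuantile β (conformalWeights w z) fun o => (s (z o) : EReal)

lemma conformalWeights_nonneg {w : Z → ℝ} (hw0 : ∀ z, 0 ≤ w z) (z : Option ι → Z)
    (o : Option ι) : 0 ≤ conformalWeights w z o :=
  div_nonneg (hw0 _) (Finset.sum_nonneg fun _ _ => hw0 _)

lemma conformalWeights_comp_perm (w : Z → ℝ) (z : Option ι → Z) (σ : Equiv.Perm (Option ι)) :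
    conformalWeights w (z ∘ σ) = conformalWeights w z ∘ σ := by
  funext o
  simp only [conformalWeights, Function.comp_apply, Equiv.sum_comp σ fun o => w (z o)]

lemma oracleQuantile_comp_perm (β : ℝ) (w s : Z → ℝ) (z : Option ι → Z)
    (σ : Equiv.Perm (Option ι)) : oracleQuantile β w s (z ∘ σ) = oracleQuantile β w s z := by
  rw [oracleQuantile, conformalWeights_comp_perm]
  exact wQuantile_comp_perm β _ (fun o => (s (z o) : EReal)) σ

lemma oracleQuantile_le_conformalQuantile (β : ℝ) {w : Z → ℝ} (hw0 : ∀ z, 0 ≤ w z) (s : Z → ℝ)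
    (z : Option ι → Z) : oracleQuantile β w s z ≤ conformalQuantile β w s z := by
  refine wQuantile_mono (conformalWeights_nonneg hw0 z) fun o => ?_
  cases o
  · exact le_top
  · exact le_rfl

lemma sum_filter_oracleQuantile_lt_le {α : ℝ} (hα : 0 ≤ α) {w : Z → ℝ} (hw0 : ∀ z, 0 ≤ w z)
    (s : Z → ℝ) (z : Option ι → Z) :
    ∑ o ∈ Finset.univ.filter (fun o => oracleQuantile (1 - α) w s z < s (z o)), w (z o)
      ≤ α * ∑ o, w (z o) := by
  have h := sum_filter_wQuantile_div_lt_le (by linarith : 1 - α ≤ 1) (fun o => hw0 (z o)) rfl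
    fun o => (s (z o) : EReal)
  rwa [sub_sub_cancel] at h

variable [MeasurableSpace Z] {w s : Z → ℝ}

lemma conformalQuantile_piOptionEquivProd_symm (β : ℝ) (c : ι → Z) (t : Z) :
    conformalQuantile β w s ((MeasurableEquiv.piOptionEquivProd fun _ : Option ι => Z).symm (c, t))
      = wQuantile β (fun o : Option ι => o.elim (w t / (∑ j, w (c j) + w t)) fun i =>
          w (c i) / (∑ j, w (c j) + w t)) fun o => o.elim ⊤ fun i => (s (c i) : EReal) := by
  have hsum : ∑ o, w ((MeasurableEquiv.piOptionEquivProd fun _ : Option ι => Z).symm (c, t) o)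
      = ∑ j, w (c j) + w t := by
    rw [Fintype.sum_option, add_comm]
    rfl
  rw [conformalQuantile]
  congr 1
  funext o
  cases o <;> simp only [conformalWeights, hsum] <;> rfl

lemma measurable_conformalWeights (hw : Measurable w) (o : Option ι) :
    Measurable fun z : Option ι → Z => conformalWeights w z o :=
  (hw.comp (measurable_pi_apply o)).div <|
    Finset.measurable_sum _ fun o' _ => hw.comp (measurable_pi_apply o')

lemma measurable_conformalQuantile (β : ℝ) (hw : Measurable w) (hw0 : ∀ z, 0 ≤ w z)
    (hs : Measurable s) : Measurable (conformalQuantile (ι := ι) β w s) := by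
  refine Measurable.wQuantile β (measurable_conformalWeights hw) (conformalWeights_nonneg hw0)
    fun o => ?_
  cases o
  · exact measurable_const
  · exact measurable_coe_real_ereal.comp (hs.comp (measurable_pi_apply _))

lemma measurableSet_le_conformalQuantile (β : ℝ) (hw : Measurable w) (hw0 : ∀ z, 0 ≤ w z)
    (hs : Measurable s) :
    MeasurableSet {z : Option ι → Z | (s (z none) : EReal) ≤ conformalQuantile β w s z} :=
  measurableSet_le (measurable_coe_real_ereal.comp (hs.comp (measurable_pi_apply none)))
    (measurable_conformalQuantile β hw hw0 hs)

lemma measurable_oracleQuantile (β : ℝ) (hw : Measurable w) (hw0 : ∀ z, 0 ≤ w z)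
    (hs : Measurable s) : Measurable (oracleQuantile (ι := ι) β w s) :=
  Measurable.wQuantile β (measurable_conformalWeights hw) (conformalWeights_nonneg hw0)
    fun o => measurable_coe_real_ereal.comp (hs.comp (measurable_pi_apply o))

lemma lintegral_pi_comp_perm {κ : Type*} [Fintype κ] (ν : Measure Z) [SigmaFinite ν]
    (σ : Equiv.Perm κ) (f : (κ → Z) → ℝ≥0∞) :
    ∫⁻ z, f (z ∘ σ) ∂(Measure.pi fun _ => ν) = ∫⁻ z, f z ∂(Measure.pi fun _ => ν) :=
  (measurePreserving_arrowCongr' (fun _ => ν) (fun _ => ν) σ.symm (MeasurableEquiv.refl Z)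
    fun _ => MeasurePreserving.id ν).lintegral_comp_emb (MeasurableEquiv.measurableEmbedding _) f

variable (ν : Measure Z) [IsProbabilityMeasure ν]

lemma lintegral_pi_ofReal_comp_eval (hw : Measurable w) (o : Option ι) :
    ∫⁻ z, ENNReal.ofReal (w (z o)) ∂(Measure.pi fun _ => ν) = ∫⁻ y, ENNReal.ofReal (w y) ∂ν :=
  (measurePreserving_eval (fun _ => ν) o).lintegral_comp (ENNReal.measurable_ofReal.comp hw)

theorem oracleQuantile_miscoverage_le (hw : Measurable w) (hw0 : ∀ z, 0 ≤ w z)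
    (hw1 : ∫⁻ y, ENNReal.ofReal (w y) ∂ν = 1) (hs : Measurable s) {α : ℝ} (hα : 0 ≤ α) :
    (Measure.pi fun _ : Option ι => ν).withDensity (fun z => ENNReal.ofReal (w (z none)))
      {z | oracleQuantile (1 - α) w s z < s (z none)} ≤ ENNReal.ofReal α := by
  set π := Measure.pi fun _ : Option ι => ν
  set B : Option ι → Set (Option ι → Z) := fun o => {z | oracleQuantile (1 - α) w s z < s (z o)}
  set h : Option ι → (Option ι → Z) → ℝ≥0∞ :=
    fun o z => if oracleQuantile (1 - α) w s z < s (z o) then ENNReal.ofReal (w (z o)) else 0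
  have hg : ∀ o, Measurable fun z : Option ι → Z => ENNReal.ofReal (w (z o)) := fun o =>
    ENNReal.measurable_ofReal.comp (hw.comp (measurable_pi_apply o))
  have hB : ∀ o, MeasurableSet (B o) := fun o =>
    measurableSet_lt (measurable_oracleQuantile _ hw hw0 hs)
      (measurable_coe_real_ereal.comp (hs.comp (measurable_pi_apply o)))
  have hh : ∀ o, Measurable (h o) := fun o =>
    Measurable.ite (hB o) (hg o) measurable_const
  -- exchangeability: swapping the test point with `z o` preserves `π` and the oracle quantile
  have hexch : ∀ o, ∫⁻ z, h o z ∂π = ∫⁻ z, h none z ∂π := by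
    classical
    intro o
    rw [← lintegral_pi_comp_perm ν (Equiv.swap none o) (h o)]
    congr 1 with z
    simp only [h, oracleQuantile_comp_perm, Function.comp_apply, Equiv.swap_apply_right]
  have hpt : ∀ z, ∑ o, h o z ≤ ENNReal.ofReal α * ∑ o, ENNReal.ofReal (w (z o)) := by
    intro z
    rw [← Finset.sum_filter, ← ENNReal.ofReal_sum_of_nonneg fun o _ => hw0 _,
      ← ENNReal.ofReal_sum_of_nonneg fun o _ => hw0 _, ← ENNReal.ofReal_mul hα]
    exact ENNReal.ofReal_le_ofReal (sum_filter_oracleQuantile_lt_le hα hw0 s z)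
  have hcard : (Fintype.card (Option ι) : ℝ≥0∞) * ∫⁻ z, h none z ∂π
      ≤ Fintype.card (Option ι) * ENNReal.ofReal α :=
    calc (Fintype.card (Option ι) : ℝ≥0∞) * ∫⁻ z, h none z ∂π
        = ∑ o, ∫⁻ z, h o z ∂π := by simp [hexch]
      _ = ∫⁻ z, ∑ o, h o z ∂π := (lintegral_finsetSum _ fun o _ => hh o).symm
      _ ≤ ∫⁻ z, ENNReal.ofReal α * ∑ o, ENNReal.ofReal (w (z o)) ∂π := lintegral_mono hpt
      _ = ENNReal.ofReal α * ∑ o, ∫⁻ z, ENNReal.ofReal (w (z o)) ∂π := by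
        rw [lintegral_const_mul _ (Finset.measurable_sum _ fun o _ => hg o),
          lintegral_finsetSum _ fun o _ => hg o]
      _ = Fintype.card (Option ι) * ENNReal.ofReal α := by
        rw [Finset.sum_congr rfl fun o _ => (lintegral_pi_ofReal_comp_eval ν hw o).trans hw1]
        simp [mul_comm]
  have hind : (B none).indicator (fun z => ENNReal.ofReal (w (z none))) = h none := by
    funext z
    simp [Set.indicator_apply, h, B]
  rw [withDensity_apply _ (hB none), ← lintegral_indicator (hB none), hind]
  exact (ENNReal.mul_le_mul_iff_right (by simp) (by simp)).1 hcard

theorem conformalQuantile_coverage (hw : Measurable w) (hw0 : ∀ z, 0 ≤ w z)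
    (hw1 : ∫⁻ y, ENNReal.ofReal (w y) ∂ν = 1) (hs : Measurable s) {α : ℝ} (hα : 0 ≤ α) :
    1 - α ≤ ((Measure.pi fun _ : Option ι => ν).withDensity
      (fun z => ENNReal.ofReal (w (z none)))).real
        {z | (s (z none) : EReal) ≤ conformalQuantile (1 - α) w s z} := by
  set Λ := (Measure.pi fun _ : Option ι => ν).withDensity (fun z => ENNReal.ofReal (w (z none)))
  have : IsProbabilityMeasure Λ := ⟨by
    rw [withDensity_apply _ MeasurableSet.univ, Measure.restrict_univ,
      lintegral_pi_ofReal_comp_eval ν hw (none : Option ι), hw1]⟩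
  have hmis : Λ {z | (s (z none) : EReal) ≤ conformalQuantile (1 - α) w s z}ᶜ
      ≤ ENNReal.ofReal α := by
    refine (measure_mono fun z hz => ?_).trans (oracleQuantile_miscoverage_le ν hw hw0 hw1 hs hα)
    exact (oracleQuantile_le_conformalQuantile _ hw0 s z).trans_lt (not_le.1 hz)
  have hmis' : Λ.real {z | (s (z none) : EReal) ≤ conformalQuantile (1 - α) w s z}ᶜ ≤ α :=
    ENNReal.toReal_le_of_le_ofReal hα hmis
  linarith [probReal_compl_eq_one_sub (μ := Λ)
    (measurableSet_le_conformalQuantile (ι := ι) (1 - α) hw hw0 hs)]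

end WeightedConformal

section Conditioning

variable {Ω A B Z : Type*} [MeasurableSpace Ω] [MeasurableSpace A] [mB : MeasurableSpace B]
  [MeasurableSpace Z] {μ : Measure Ω}

lemma ProbabilityTheory.IndepFun.map_prodMk_cond [IsFiniteMeasure μ] {J : Ω → A} {T : Ω → B}
    (hJT : IndepFun J T μ) (hJ : Measurable J) (hT : Measurable T) {S : Set Ω}
    (hS : MeasurableSet[mB.comap T] S) :
    (μ[|S]).map (fun x => (J x, T x)) = (μ.map J).prod ((μ[|S]).map T) := by
  obtain ⟨V, hV, rfl⟩ := hS
  refine (Measure.prod_eq fun a b ha hb => ?_).symm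
  rw [Measure.map_apply (hJ.prodMk hT) (ha.prod hb), Measure.map_apply hJ ha,
    Measure.map_apply hT hb, Set.mk_preimage_prod, cond_apply (hT hV), cond_apply (hT hV),
    Set.inter_left_comm, ← Set.preimage_inter,
    hJT.measure_inter_preimage_eq_mul _ _ ha (hV.inter hb)]
  ring

variable [IsProbabilityMeasure μ] {ι : Type*} [Fintype ι] {X : ι → Ω → A} {Q : Measure A}
  [IsFiniteMeasure Q] {T : Ω → B} {S : Set Ω} {φ : A → Z} {ψ : B → Z}

lemma map_cond_prodMk_eq_pi_prod (hX : ∀ i, Measurable (X i)) (hiid : iIndepFun X μ)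
    (hlaw : ∀ i, μ.map (X i) = Q) (hT : Measurable T) (hXT : IndepFun (fun x i => X i x) T μ)
    (hS : MeasurableSet[mB.comap T] S) (hφ : Measurable φ) (hψ : Measurable ψ) :
    (μ[|S]).map (fun x => (fun i => φ (X i x), ψ (T x))) =
      (Measure.pi fun _ : ι => Q.map φ).prod ((μ[|S]).map fun x => ψ (T x)) := by
  have hJ : Measurable fun x i => X i x := measurable_pi_lambda _ hX
  have hpi : μ.map (fun x i => X i x) = Measure.pi fun _ => Q := by
    rw [(iIndepFun_iff_map_fun_eq_pi_map fun i => (hX i).aemeasurable).1 hiid]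
    simp_rw [hlaw]
  have hφpi : Measurable fun (y : ι → A) i => φ (y i) :=
    measurable_pi_lambda _ fun i => hφ.comp (measurable_pi_apply i)
  rw [show (fun x => (fun i => φ (X i x), ψ (T x))) =
      Prod.map (fun y i => φ (y i)) ψ ∘ fun x => (fun i => X i x, T x) from rfl,
    ← Measure.map_map (hφpi.prodMap hψ) (hJ.prodMk hT), hXT.map_prodMk_cond hJ hT hS,
    ← Measure.map_prod_map _ _ hφpi hψ, hpi, Measure.pi_map_pi fun _ => hφ.aemeasurable,
    Measure.map_map hψ hT]
  rfl

lemma map_withDensity_comp {f : A → B} (hf : Measurable f) (κ : Measure A) {g : B → ℝ≥0∞}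
    (hg : Measurable g) : (κ.withDensity (g ∘ f)).map f = (κ.map f).withDensity g := by
  ext t ht
  rw [Measure.map_apply hf ht, withDensity_apply _ (hf ht), withDensity_apply _ ht,
    setLIntegral_map ht hg hf]
  rfl

lemma map_piOptionEquivProd_symm_prod_withDensity (ν : Measure Z) [SigmaFinite ν]
    {g : Z → ℝ≥0∞} (hg : Measurable g) :
    ((Measure.pi fun _ : ι => ν).prod (ν.withDensity g)).map
        (MeasurableEquiv.piOptionEquivProd fun _ : Option ι => Z).symm =
      (Measure.pi fun _ : Option ι => ν).withDensity fun z => g (z none) := by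
  rw [prod_withDensity_right hg,
    show (fun p : (ι → Z) × Z => g p.2) =
      (fun z : Option ι → Z => g (z none)) ∘ (MeasurableEquiv.piOptionEquivProd _).symm from rfl,
    map_withDensity_comp (g := fun z : Option ι → Z => g (z none)) (MeasurableEquiv.measurable _)
      _ (hg.comp (measurable_pi_apply none)),
    Measure.pi_map_piOptionEquivProd (fun _ : Option ι => ν)]

lemma map_cond_piOptionEquivProd_symm (hX : ∀ i, Measurable (X i)) (hiid : iIndepFun X μ)
    (hlaw : ∀ i, μ.map (X i) = Q) (hT : Measurable T) (hXT : IndepFun (fun x i => X i x) T μ)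
    (hS : MeasurableSet[mB.comap T] S) (hφ : Measurable φ) (hψ : Measurable ψ)
    {g : Z → ℝ≥0∞} (hg : Measurable g)
    (hdens : (μ[|S]).map (fun x => ψ (T x)) = (Q.map φ).withDensity g) :
    (μ[|S]).map (fun x => (MeasurableEquiv.piOptionEquivProd fun _ : Option ι => Z).symm
        (fun i => φ (X i x), ψ (T x))) =
      (Measure.pi fun _ : Option ι => Q.map φ).withDensity fun z => g (z none) := by
  have hsample : Measurable fun x => (fun i => φ (X i x), ψ (T x)) :=
    (measurable_pi_lambda _ fun i => hφ.comp (hX i)).prodMk (hψ.comp hT)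
  refine (Measure.map_map (MeasurableEquiv.measurable _) hsample).symm.trans ?_
  rw [map_cond_prodMk_eq_pi_prod hX hiid hlaw hT hXT hS hφ hψ, hdens]
  exact map_piOptionEquivProd_symm_prod_withDensity _ hg

end Conditioning

lemma measurable_option_some {α : Type u} [MeasurableSpace α] :
    Measurable (some : α → Option α) := by
  rintro _ ⟨t, ht, rfl⟩
  exact measurable_inl ht

lemma measurable_maskOp {d : ℕ} (m : Fin d → Bool) :
    Measurable fun x : Fin d → ℝ => maskOp x m := by
  refine measurable_pi_lambda _ fun j => ?_
  by_cases hj : m j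
  · simp only [maskOp, hj, if_true, measurable_const]
  · simp only [maskOp, hj, Bool.false_eq_true, if_false]
    exact measurable_option_some.comp (measurable_pi_apply j)

theorem weighted_conformal_mask_conditional_coverage_general
    (d n : ℕ) (α : ℝ) (hα : α ∈ Set.Ioo (0 : ℝ) 1)
    (s : (Fin d → Option ℝ) × ℝ → ℝ) (hs : Measurable s)
    (Q : Measure ((Fin d → ℝ) × ℝ)) [IsProbabilityMeasure Q]
    {Ω : Type*} [MeasurableSpace Ω] (μ : Measure Ω) [IsProbabilityMeasure μ]
    (XY : Fin n → Ω → (Fin d → ℝ) × ℝ) (hXYmeas : ∀ i, Measurable (XY i))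
    (hXYiid : iIndepFun XY μ)
    (hXYlaw : ∀ i, Measure.map (XY i) μ = Q)
    (Xt : Ω → Fin d → ℝ) (Mt : Ω → Fin d → Bool) (Yt : Ω → ℝ)
    (hXt : Measurable Xt) (hMt : Measurable Mt) (hYt : Measurable Yt)
    (hindep : IndepFun (fun x => fun i => XY i x) (fun x => (Xt x, Mt x, Yt x)) μ)
    (m : Fin d → Bool) (hm : μ {x | Mt x = m} ≠ 0)
    (wm : (Fin d → Option ℝ) × ℝ → ℝ) (hwmeas : Measurable wm) (hw0 : ∀ z, 0 ≤ wm z)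
    (hac : Measure.map (fun x => (maskOp (Xt x) m, Yt x)) (μ[|{x | Mt x = m}]) ≪
           Measure.map (fun p => (maskOp p.1 m, p.2)) Q)
    (hwrnd : ∀ᵐ z ∂(Measure.map (fun p => (maskOp p.1 m, p.2)) Q),
      ENNReal.ofReal (wm z) =
        (Measure.map (fun x => (maskOp (Xt x) m, Yt x)) (μ[|{x | Mt x = m}])).rnDeriv
          (Measure.map (fun p => (maskOp p.1 m, p.2)) Q) z) :
    1 - α ≤
      ((μ[|{x | Mt x = m}]) {x | ((s (maskOp (Xt x) (Mt x), Yt x) : ℝ) : EReal) ≤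
        wQuantile (1 - α)
          (fun i : Option (Fin n) =>
            i.elim
              (wm (maskOp (Xt x) (Mt x), Yt x) /
                ((∑ j : Fin n, wm (maskOp (XY j x).1 m, (XY j x).2)) +
                  wm (maskOp (Xt x) (Mt x), Yt x)))
              (fun j => wm (maskOp (XY j x).1 m, (XY j x).2) /
                ((∑ j' : Fin n, wm (maskOp (XY j' x).1 m, (XY j' x).2)) +
                  wm (maskOp (Xt x) (Mt x), Yt x))))
          (fun i : Option (Fin n) =>
            i.elim (⊤ : EReal)
              (fun j => ((s (maskOp (XY j x).1 m, (XY j x).2) : ℝ) : EReal)))}).toReal := by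
  have hS : MeasurableSet {x | Mt x = m} := hMt (measurableSet_singleton m)
  have : IsProbabilityMeasure (μ[|{x | Mt x = m}]) := cond_isProbabilityMeasure hm
  have hmask : Measurable fun p : (Fin d → ℝ) × ℝ => (maskOp p.1 m, p.2) :=
    ((measurable_maskOp m).comp measurable_fst).prodMk measurable_snd
  have : IsProbabilityMeasure (Q.map fun p => (maskOp p.1 m, p.2)) :=
    Measure.isProbabilityMeasure_map hmask.aemeasurable
  have htest : Measurable fun x => (maskOp (Xt x) m, Yt x) :=
    ((measurable_maskOp m).comp hXt).prodMk hYt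
  have hdens : (μ[|{x | Mt x = m}]).map (fun x => (maskOp (Xt x) m, Yt x)) =
      (Q.map fun p => (maskOp p.1 m, p.2)).withDensity fun z => ENNReal.ofReal (wm z) := by
    rw [withDensity_congr_ae hwrnd, Measure.withDensity_rnDeriv_eq _ _ hac]
  have hw1 : ∫⁻ z, ENNReal.ofReal (wm z) ∂(Q.map fun p => (maskOp p.1 m, p.2)) = 1 := by
    rw [← setLIntegral_univ, ← withDensity_apply _ MeasurableSet.univ, ← hdens]
    exact (Measure.isProbabilityMeasure_map htest.aemeasurable).measure_univ
  have hlaw := map_cond_piOptionEquivProd_symm (S := {x | Mt x = m})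
    (ψ := fun p : (Fin d → ℝ) × (Fin d → Bool) × ℝ => (maskOp p.1 m, p.2.2)) hXYmeas hXYiid hXYlaw
    (hXt.prodMk (hMt.prodMk hYt)) hindep ⟨_, measurable_snd.fst (measurableSet_singleton m), rfl⟩
    hmask (((measurable_maskOp m).comp measurable_fst).prodMk measurable_snd.snd)
    (g := fun z => ENNReal.ofReal (wm z)) (ENNReal.measurable_ofReal.comp hwmeas) hdens
  calc 1 - α ≤ _ := conformalQuantile_coverage _ hwmeas hw0 hw1 hs hα.1.le
    _ = _ := by
      rw [measureReal_def, ← hlaw,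
        Measure.map_apply ?_ (measurableSet_le_conformalQuantile _ hwmeas hw0 hs)]
      · congr 1
        refine measure_congr ((ae_cond_mem hS).mono fun x (hx : Mt x = m) => ?_)
        change (_ ≤ conformalQuantile _ _ _ _) = (_ ≤ _)
        rw [conformalQuantile_piOptionEquivProd_symm, hx]
        rfl
      · exact (MeasurableEquiv.measurable _).comp
          ((measurable_pi_lambda _ fun i => hmask.comp (hXYmeas i)).prodMk htest)

/-- Mask-conditional validity of weighted split conformal prediction after
pre-imputation: calibration pairs `(X̂^i, Y^i)` i.i.d. with law `Q`, test triple
`(X^{n+1}, M^{n+1}, Y^{n+1})` independent of them; with `P*_m` the conditional law of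
`(mask(X^{n+1},m), Y^{n+1})` given `{M^{n+1}=m}`, `Q*_m` the law of `(mask(X̂^1,m), Y^1)`,
and `ω_m` a measurable version of `dP*_m/dQ*_m`, the weighted conformal set covers with
conditional probability `≥ 1-α` given `{M^{n+1}=m}`. -/
theorem weighted_conformal_mask_conditional_coverage
    (d n : ℕ) (hd : 1 ≤ d) (hn : 1 ≤ n) (α : ℝ) (hα : α ∈ Set.Ioo (0 : ℝ) 1)
    (s : (Fin d → Option ℝ) × ℝ → ℝ) (hs : Measurable s)
    (Q : Measure ((Fin d → ℝ) × ℝ)) [IsProbabilityMeasure Q]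
    {Ω : Type*} [MeasurableSpace Ω] (μ : Measure Ω) [IsProbabilityMeasure μ]
    (XY : Fin n → Ω → (Fin d → ℝ) × ℝ) (hXYmeas : ∀ i, Measurable (XY i))
    (hXYiid : iIndepFun XY μ)
    (hXYlaw : ∀ i, Measure.map (XY i) μ = Q)
    (Xt : Ω → Fin d → ℝ) (Mt : Ω → Fin d → Bool) (Yt : Ω → ℝ)
    (hXt : Measurable Xt) (hMt : Measurable Mt) (hYt : Measurable Yt)
    (hindep : IndepFun (fun x => fun i => XY i x) (fun x => (Xt x, Mt x, Yt x)) μ)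
    (m : Fin d → Bool) (hm : μ {x | Mt x = m} ≠ 0)
    (wm : (Fin d → Option ℝ) × ℝ → ℝ) (hwmeas : Measurable wm) (hw0 : ∀ z, 0 ≤ wm z)
    (hac : Measure.map (fun x => (maskOp (Xt x) m, Yt x)) (μ[|{x | Mt x = m}]) ≪
           Measure.map (fun p => (maskOp p.1 m, p.2)) Q)
    (hwrnd : ∀ᵐ z ∂(Measure.map (fun p => (maskOp p.1 m, p.2)) Q),
      ENNReal.ofReal (wm z) =
        (Measure.map (fun x => (maskOp (Xt x) m, Yt x)) (μ[|{x | Mt x = m}])).rnDeriv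
          (Measure.map (fun p => (maskOp p.1 m, p.2)) Q) z) :
    1 - α ≤
      ((μ[|{x | Mt x = m}]) {x | ((s (maskOp (Xt x) (Mt x), Yt x) : ℝ) : EReal) ≤
        wQuantile (1 - α)
          (fun i : Option (Fin n) =>
            i.elim
              (wm (maskOp (Xt x) (Mt x), Yt x) /
                ((∑ j : Fin n, wm (maskOp (XY j x).1 m, (XY j x).2)) +
                  wm (maskOp (Xt x) (Mt x), Yt x)))
              (fun j => wm (maskOp (XY j x).1 m, (XY j x).2) /
                ((∑ j' : Fin n, wm (maskOp (XY j' x).1 m, (XY j' x).2)) +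
                  wm (maskOp (Xt x) (Mt x), Yt x))))
          (fun i : Option (Fin n) =>
            i.elim (⊤ : EReal)
              (fun j => ((s (maskOp (XY j x).1 m, (XY j x).2) : ℝ) : EReal)))}).toReal :=
  weighted_conformal_mask_conditional_coverage_general d n α hα s hs Q μ XY hXYmeas hXYiid hXYlaw Xt
    Mt Yt hXt hMt hYt hindep m hm wm hwmeas hw0 hac hwrnd
end

section
/- Let (Z, 𝒵) be a measurable space, let Q and P be probability measures on Z with P absolutely continuous with respect to Q, and let ω : Z → [0,∞) be a measurable version of the Radon–Nikodym density dP/dQ. On a common probability space, let Z^1, …, Z^n be i.i.d. with law Q and let Z^{n+1} have law P, with Z^1, …, Z^{n+1} mutually independent. Let V : Z → ℝ be measurable and α ∈ (0,1). Define the weights p_i := ω(Z^i) / (Σ_{j=1}^n ω(Z^j) + ω(Z^{n+1})) for i = 1, …, n+1 (with the convention that the weighted quantile below is +∞ when the denominator is 0). Then P( V(Z^{n+1}) ≤ Quantile_{1−α}( Σ_{i=1}^n p_i δ_{V(Z^i)} + p_{n+1} δ_{+∞} ) ) ≥ 1 − α. -/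
/-!
Write `g = ofReal ∘ w` for `dP/dQ`. The joint law of `(Z¹, …, Zⁿ⁺¹)` is `Q^{⊗(n+1)}` with density
`g(zₙ₊₁)`, and coverage fails exactly when the normalised weight of the scores lying strictly below
`V(zₙ₊₁)` reaches `1 - α`. Since `Q^{⊗(n+1)}` is invariant under permuting coordinates, the
miscoverage probability `∫ 1[event for n+1] g(zₙ₊₁)` equals `∫ 1[event for i] g(zᵢ)` for every `i`,
hence their average. Pointwise, the indices whose lower mass reaches `1 - α` all lie at or above
the lowest of them, which already has a `1 - α` fraction of the weight strictly below it; so they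
carry at most `α ∑ᵢ g(zᵢ)`, whose integral is `α (n + 1)`.
-/

open MeasureTheory ProbabilityTheory
open scoped ENNReal

universe u

open Finset

lemma wQuantile_lt_coe_iff {ι : Type*} [Fintype ι] {β : ℝ} {p : ι → ℝ}
    (hp : ∀ i, 0 ≤ p i) (v : ι → EReal) (a : ℝ) :
    wQuantile β p v < a ↔ β ≤ ∑ i ∈ univ.filter (fun i => v i < a), p i := by
  rw [wQuantile, sInf_lt_iff]
  constructor
  · rintro ⟨_, ⟨r, rfl, hr⟩, hra⟩
    refine hr.trans (sum_le_sum_of_subset_of_nonneg (fun i hi => ?_) fun i _ _ => hp i)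
    simp only [mem_filter, mem_univ, true_and] at hi ⊢
    exact hi.trans_lt hra
  · intro h
    set G := univ.filter (fun i => v i < a)
    obtain ⟨r, hGr, hra⟩ := EReal.lt_iff_exists_real_btwn.mp
      ((Finset.sup_lt_iff (EReal.bot_lt_coe a)).mpr fun i hi => (mem_filter.mp hi).2 : G.sup v < a)
    refine ⟨r, ⟨r, rfl, h.trans (sum_le_sum_of_subset_of_nonneg (fun i hi => ?_)
      fun i _ _ => hp i)⟩, hra⟩
    simp only [mem_filter, mem_univ, true_and]
    exact (le_sup hi).trans hGr.le

/-- When all weights vanish, `x / 0 = 0` makes this `0`, matching the convention that the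
quantile is then `+∞`. -/
noncomputable def lowerMass {ι : Type*} [Fintype ι] (u v : ι → ℝ) (i : ι) : ℝ :=
  ∑ k ∈ univ.filter (fun k => v k < v i), u k / ∑ j, u j

lemma wQuantile_lt_iff_le_lowerMass {n : ℕ} {β : ℝ} {u : Fin (n + 1) → ℝ}
    (hu : ∀ i, 0 ≤ u i) (v : Fin (n + 1) → ℝ) :
    wQuantile β (fun i => u i / ∑ j, u j)
        (fun i => if (i : ℕ) < n then (v i : EReal) else ⊤) < v (Fin.last n) ↔
      β ≤ lowerMass u v (Fin.last n) := by
  rw [wQuantile_lt_coe_iff (fun i => div_nonneg (hu i) (sum_nonneg fun j _ => hu j)), lowerMass]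
  congr! 3 with i
  induction i using Fin.lastCases with
  | last => simp
  | cast i => simp [EReal.coe_lt_coe_iff]

lemma sum_filter_le_lowerMass_le {ι : Type*} [Fintype ι] {β : ℝ} (hβ : β ≤ 1) {u : ι → ℝ}
    (hu : ∀ i, 0 ≤ u i) (v : ι → ℝ) :
    ∑ i ∈ univ.filter (fun i => β ≤ lowerMass u v i), u i ≤ (1 - β) * ∑ j, u j := by
  set S := ∑ j, u j
  have hS : 0 ≤ S := sum_nonneg fun j _ => hu j
  set B := univ.filter (fun i => β ≤ lowerMass u v i)
  rcases B.eq_empty_or_nonempty with hB | hB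
  · rw [hB, sum_empty]
    exact mul_nonneg (sub_nonneg.mpr hβ) hS
  obtain ⟨i₀, hi₀, hmin⟩ := exists_min_image B v hB
  have hβi₀ : β * S ≤ ∑ k ∈ univ.filter (fun k => v k < v i₀), u k := by
    rcases hS.eq_or_lt with hS0 | hSpos
    · rw [← hS0, mul_zero]
      exact sum_nonneg fun k _ => hu k
    · have : β ≤ lowerMass u v i₀ := (mem_filter.mp hi₀).2
      rwa [lowerMass, ← sum_div, le_div_iff₀ hSpos] at this
  calc ∑ i ∈ B, u i ≤ ∑ i ∈ univ.filter (fun i => ¬ v i < v i₀), u i :=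
        sum_le_sum_of_subset_of_nonneg (fun i hi => by simpa using hmin i hi) fun i _ _ => hu i
    _ = S - ∑ i ∈ univ.filter (fun i => v i < v i₀), u i := by
        rw [eq_sub_iff_add_eq, add_comm, sum_filter_add_sum_filter_not]
    _ ≤ (1 - β) * S := by linarith

lemma lowerMass_comp_perm {ι : Type*} [Fintype ι] (u v : ι → ℝ) (σ : Equiv.Perm ι) (i : ι) :
    lowerMass (u ∘ σ) (v ∘ σ) i = lowerMass u v (σ i) := by
  simp only [lowerMass, sum_filter, Function.comp_apply, Equiv.sum_comp σ u]
  exact Equiv.sum_comp σ (fun k => if v k < v (σ i) then u k / ∑ j, u j else 0)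

section Exchangeable

variable {ι Z : Type*} [Fintype ι] [MeasurableSpace Z]

lemma measurePreserving_comp_perm (Q : Measure Z) [SigmaFinite Q] (σ : Equiv.Perm ι) :
    MeasurePreserving (fun z : ι → Z => z ∘ σ) (Measure.pi fun _ => Q) (Measure.pi fun _ => Q) := by
  convert (measurePreserving_piCongrLeft (fun _ : ι => Q) σ.symm) using 1
  ext z i
  simp [MeasurableEquiv.piCongrLeft, Equiv.piCongrLeft_apply]

lemma lintegral_eq_of_comp_perm [DecidableEq ι] (Q : Measure Z) [SigmaFinite Q]
    {F : ι → (ι → Z) → ℝ≥0∞} (hF : ∀ i, Measurable (F i))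
    (hperm : ∀ (σ : Equiv.Perm ι) i z, F i (z ∘ σ) = F (σ i) z) (i j : ι) :
    ∫⁻ z, F i z ∂Measure.pi (fun _ => Q) = ∫⁻ z, F j z ∂Measure.pi (fun _ => Q) := by
  rw [← (measurePreserving_comp_perm Q (Equiv.swap i j)).lintegral_comp (hF i)]
  simp_rw [hperm, Equiv.swap_apply_left]

end Exchangeable

lemma Measure.pi_update_withDensity {ι : Type*} [Fintype ι] [DecidableEq ι] {α : ι → Type*}
    [∀ i, MeasurableSpace (α i)] (μ : ∀ i, Measure (α i)) [∀ i, SigmaFinite (μ i)] (j : ι)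
    {g : α j → ℝ≥0∞} (hg : Measurable g) [SigmaFinite ((μ j).withDensity g)] :
    Measure.pi (Function.update μ j ((μ j).withDensity g)) =
      (Measure.pi μ).withDensity (fun z => g (z j)) := by
  have : ∀ i, SigmaFinite (Function.update μ j ((μ j).withDensity g) i) := by
    intro i
    rcases eq_or_ne i j with rfl | hij
    · rw [Function.update_self]; infer_instance
    · rw [Function.update_of_ne hij]; infer_instance
  refine Measure.pi_eq fun s hs => ?_
  rw [withDensity_apply _ (MeasurableSet.univ_pi hs), Measure.restrict_pi_pi,
    ← lintegral_map hg (measurable_pi_apply j), Measure.pi_map_eval, lintegral_smul_measure,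
    ← withDensity_apply _ (hs j), ← mul_prod_erase univ _ (mem_univ j), Function.update_self,
    smul_eq_mul, mul_comm]
  congr 1
  refine prod_congr rfl fun i hi => ?_
  rw [Function.update_of_ne (ne_of_mem_erase hi), Measure.restrict_apply_univ]

lemma map_eq_pi_withDensity_last {Z Ω : Type*} [MeasurableSpace Z] [MeasurableSpace Ω]
    {μ : Measure Ω} {Q : Measure Z} [SigmaFinite Q] {g : Z → ℝ≥0∞} [SigmaFinite (Q.withDensity g)]
    {n : ℕ} {Zi : Fin (n + 1) → Ω → Z} (hZmeas : ∀ i, Measurable (Zi i)) (hindep : iIndepFun Zi μ)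
    (hlawQ : ∀ i : Fin n, μ.map (Zi i.castSucc) = Q)
    (hlawLast : μ.map (Zi (Fin.last n)) = Q.withDensity g) (hg : Measurable g) :
    μ.map (fun x i => Zi i x) =
      (Measure.pi fun _ => Q).withDensity fun z => g (z (Fin.last n)) := by
  rw [hindep.map_fun_eq_pi_map fun i => (hZmeas i).aemeasurable,
    ← Measure.pi_update_withDensity (fun _ => Q) (Fin.last n) hg]
  congr 1
  funext i
  induction i using Fin.lastCases with
  | last => simp [hlawLast]
  | cast i => simp [hlawQ]

section Miscoverage

variable {ι Z : Type*} [Fintype ι]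

/-- `z` lies in `miscoverageSet w V β i` iff the weighted `β`-quantile built with `zᵢ` as the test
point lies strictly below `V zᵢ`. -/
def miscoverageSet (w V : Z → ℝ) (β : ℝ) (i : ι) : Set (ι → Z) :=
  {z | β ≤ lowerMass (fun k => w (z k)) (fun k => V (z k)) i}

lemma measurableSet_miscoverageSet [MeasurableSpace Z] {w V : Z → ℝ} (hw : Measurable w)
    (hV : Measurable V) (β : ℝ) (i : ι) : MeasurableSet (miscoverageSet w V β i) := by
  refine measurableSet_le measurable_const ?_
  simp only [lowerMass, sum_filter]
  exact Finset.measurable_sum _ fun k _ =>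
    Measurable.ite (measurableSet_lt (by fun_prop) (by fun_prop)) (by fun_prop) measurable_const

lemma sum_indicator_miscoverageSet_le {w : Z → ℝ} (hw0 : ∀ z, 0 ≤ w z) (V : Z → ℝ) {β : ℝ}
    (hβ : β ≤ 1) (z : ι → Z) :
    ∑ i, (miscoverageSet w V β i).indicator (fun z => ENNReal.ofReal (w (z i))) z ≤
      ENNReal.ofReal (1 - β) * ∑ i, ENNReal.ofReal (w (z i)) := by
  classical
  rw [← ENNReal.ofReal_sum_of_nonneg fun i _ => hw0 _,
    ← ENNReal.ofReal_mul (sub_nonneg.mpr hβ)]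
  calc ∑ i, (miscoverageSet w V β i).indicator (fun z => ENNReal.ofReal (w (z i))) z
      = ENNReal.ofReal (∑ i ∈ univ.filter (fun i => z ∈ miscoverageSet w V β i), w (z i)) := by
        rw [ENNReal.ofReal_sum_of_nonneg fun i _ => hw0 _, sum_filter]
        simp only [Set.indicator_apply]
    _ ≤ _ := ENNReal.ofReal_le_ofReal (sum_filter_le_lowerMass_le hβ (fun i => hw0 _) _)

lemma lintegral_miscoverageSet_le [MeasurableSpace Z] [DecidableEq ι] (Q : Measure Z)
    [IsProbabilityMeasure Q]
    {w V : Z → ℝ} (hw : Measurable w) (hw0 : ∀ z, 0 ≤ w z) (hV : Measurable V) {β : ℝ}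
    (hβ : β ≤ 1) (j : ι) :
    ∫⁻ z in miscoverageSet w V β j, ENNReal.ofReal (w (z j)) ∂Measure.pi (fun _ => Q) ≤
      ENNReal.ofReal (1 - β) * ∫⁻ z, ENNReal.ofReal (w z) ∂Q := by
  set F : ι → (ι → Z) → ℝ≥0∞ :=
    fun i => (miscoverageSet w V β i).indicator (fun z => ENNReal.ofReal (w (z i)))
  have hF : ∀ i, Measurable (F i) := fun i =>
    (hw.comp (measurable_pi_apply i)).ennreal_ofReal.indicator
      (measurableSet_miscoverageSet hw hV β i)
  have hperm : ∀ (σ : Equiv.Perm ι) i z, F i (z ∘ σ) = F (σ i) z := by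
    intro σ i z
    have hmem : z ∘ σ ∈ miscoverageSet w V β i ↔ z ∈ miscoverageSet w V β (σ i) :=
      iff_of_eq <| congrArg (β ≤ ·) <|
        lowerMass_comp_perm (fun k => w (z k)) (fun k => V (z k)) σ i
    by_cases hz : z ∈ miscoverageSet w V β (σ i)
    · simp only [F, Set.indicator_of_mem hz, Set.indicator_of_mem (hmem.mpr hz)]
      rfl
    · simp only [F, Set.indicator_of_notMem hz, Set.indicator_of_notMem (mt hmem.mp hz)]
  have hmarginal : ∀ i, ∫⁻ z, ENNReal.ofReal (w (z i)) ∂Measure.pi (fun _ => Q) =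
      ∫⁻ z, ENNReal.ofReal (w z) ∂Q :=
    fun i => (measurePreserving_eval (fun _ : ι => Q) i).lintegral_comp hw.ennreal_ofReal
  have hcard : (Fintype.card ι : ℝ≥0∞) ≠ 0 := by
    have : Nonempty ι := ⟨j⟩
    exact Nat.cast_ne_zero.mpr Fintype.card_ne_zero
  rw [← lintegral_indicator (measurableSet_miscoverageSet hw hV β j)]
  refine (ENNReal.mul_le_mul_iff_right hcard (ENNReal.natCast_ne_top _)).mp ?_
  calc (Fintype.card ι : ℝ≥0∞) * ∫⁻ z, F j z ∂Measure.pi (fun _ => Q)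
      = ∫⁻ z, ∑ i, F i z ∂Measure.pi (fun _ => Q) := by
        rw [lintegral_finsetSum _ fun i _ => hF i,
          sum_congr rfl fun i _ => lintegral_eq_of_comp_perm Q hF hperm i j]
        simp only [sum_const, card_univ, nsmul_eq_mul]
    _ ≤ ∫⁻ z, ENNReal.ofReal (1 - β) * ∑ i, ENNReal.ofReal (w (z i)) ∂Measure.pi (fun _ => Q) :=
        lintegral_mono (sum_indicator_miscoverageSet_le hw0 V hβ)
    _ = _ := by
        rw [lintegral_const_mul _ (by fun_prop), lintegral_finsetSum _ (by fun_prop)]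
        simp only [hmarginal, sum_const, card_univ, nsmul_eq_mul]
        ring

end Miscoverage

lemma one_sub_le_toReal_of_measure_compl_le {Ω : Type*} [MeasurableSpace Ω] {μ : Measure Ω}
    [IsProbabilityMeasure μ] {s : Set Ω} {α : ℝ} (hα : 0 ≤ α)
    (hs : μ sᶜ ≤ ENNReal.ofReal α) : 1 - α ≤ (μ s).toReal := by
  have h : (1 : ℝ≥0∞) ≤ μ s + ENNReal.ofReal α :=
    calc 1 = μ Set.univ := measure_univ.symm
      _ ≤ μ s + μ sᶜ := measure_univ_le_add_compl s
      _ ≤ μ s + ENNReal.ofReal α := by gcongr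
  have := ENNReal.toReal_mono (by finiteness) h
  rw [ENNReal.toReal_add (measure_ne_top μ s) ENNReal.ofReal_ne_top,
    ENNReal.toReal_ofReal hα, ENNReal.toReal_one] at this
  linarith

theorem weighted_conformal_coverage_general
    {Z : Type*} [MeasurableSpace Z] (Q P : Measure Z)
    [IsProbabilityMeasure Q] [IsProbabilityMeasure P] (hac : P ≪ Q)
    (w : Z → ℝ) (hwmeas : Measurable w) (hw0 : ∀ z, 0 ≤ w z)
    (hwrnd : ∀ᵐ z ∂Q, ENNReal.ofReal (w z) = P.rnDeriv Q z)
    {Ω : Type*} [MeasurableSpace Ω] (μ : Measure Ω) [IsProbabilityMeasure μ]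
    (n : ℕ) (Zi : Fin (n + 1) → Ω → Z) (hZmeas : ∀ i, Measurable (Zi i))
    (hindep : iIndepFun Zi μ)
    (hlawQ : ∀ i : Fin n, Measure.map (Zi i.castSucc) μ = Q)
    (hlawP : Measure.map (Zi (Fin.last n)) μ = P)
    (V : Z → ℝ) (hV : Measurable V) (α : ℝ) (hα : α ∈ Set.Ioo (0 : ℝ) 1) :
    1 - α ≤
      (μ {x | ((V (Zi (Fin.last n) x) : ℝ) : EReal) ≤
        wQuantile (1 - α)
          (fun i : Fin (n + 1) => w (Zi i x) / ∑ j : Fin (n + 1), w (Zi j x))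
          (fun i : Fin (n + 1) =>
            if (i : ℕ) < n then ((V (Zi i x) : ℝ) : EReal) else (⊤ : EReal))}).toReal := by
  have hP : P = Q.withDensity fun z => ENNReal.ofReal (w z) :=
    ((withDensity_congr_ae hwrnd).trans (Measure.withDensity_rnDeriv_eq P Q hac)).symm
  have hlaw := map_eq_pi_withDensity_last hZmeas hindep hlawQ (hlawP.trans hP)
    hwmeas.ennreal_ofReal
  have hnorm : ∫⁻ z, ENNReal.ofReal (w z) ∂Q = 1 := by
    rw [← setLIntegral_univ, ← withDensity_apply _ MeasurableSet.univ, ← hP, measure_univ]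
  have hC := measurableSet_miscoverageSet hwmeas hV (1 - α) (Fin.last n)
  refine one_sub_le_toReal_of_measure_compl_le hα.1.le ?_
  calc μ _ = μ ((fun x i => Zi i x) ⁻¹' miscoverageSet w V (1 - α) (Fin.last n)) := by
        congr 1
        ext x
        simp only [Set.mem_compl_iff, Set.mem_ofPred_eq, not_le, Set.mem_preimage]
        exact wQuantile_lt_iff_le_lowerMass (fun i => hw0 (Zi i x)) fun i => V (Zi i x)
    _ = ∫⁻ z in miscoverageSet w V (1 - α) (Fin.last n), ENNReal.ofReal (w (z (Fin.last n)))
          ∂Measure.pi (fun _ => Q) := by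
        rw [← Measure.map_apply (measurable_pi_lambda _ hZmeas) hC, hlaw, withDensity_apply _ hC]
    _ ≤ ENNReal.ofReal (1 - (1 - α)) * ∫⁻ z, ENNReal.ofReal (w z) ∂Q :=
        lintegral_miscoverageSet_le Q hwmeas hw0 hV (by linarith [hα.1]) (Fin.last n)
    _ = ENNReal.ofReal α := by rw [hnorm, sub_sub_cancel, mul_one]

/-- Weighted conformal prediction under a likelihood-ratio shift:
`Z^1, …, Z^n` i.i.d. with law `Q`, `Z^{n+1}` with law `P ≪ Q`, all mutually independent,
`ω` a measurable version of `dP/dQ`.  With weights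
`p_i = ω(Z^i)/(∑_{j=1}^n ω(Z^j) + ω(Z^{n+1}))`, the weighted split quantile of the scores
`V(Z^i)` (with weight `p_{n+1}` on `+∞`) covers `V(Z^{n+1})` with probability `≥ 1-α`. -/
theorem weighted_conformal_coverage
    {Z : Type*} [MeasurableSpace Z] (Q P : Measure Z)
    [IsProbabilityMeasure Q] [IsProbabilityMeasure P] (hac : P ≪ Q)
    (w : Z → ℝ) (hwmeas : Measurable w) (hw0 : ∀ z, 0 ≤ w z)
    (hwrnd : ∀ᵐ z ∂Q, ENNReal.ofReal (w z) = P.rnDeriv Q z)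
    {Ω : Type*} [MeasurableSpace Ω] (μ : Measure Ω) [IsProbabilityMeasure μ]
    (n : ℕ) (hn : 1 ≤ n) (Zi : Fin (n + 1) → Ω → Z) (hZmeas : ∀ i, Measurable (Zi i))
    (hindep : iIndepFun Zi μ)
    (hlawQ : ∀ i : Fin n, Measure.map (Zi i.castSucc) μ = Q)
    (hlawP : Measure.map (Zi (Fin.last n)) μ = P)
    (V : Z → ℝ) (hV : Measurable V) (α : ℝ) (hα : α ∈ Set.Ioo (0 : ℝ) 1) :
    1 - α ≤
      (μ {x | ((V (Zi (Fin.last n) x) : ℝ) : EReal) ≤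
        wQuantile (1 - α)
          (fun i : Fin (n + 1) => w (Zi i x) / ∑ j : Fin (n + 1), w (Zi j x))
          (fun i : Fin (n + 1) =>
            if (i : ℕ) < n then ((V (Zi i x) : ℝ) : EReal) else (⊤ : EReal))}).toReal :=
  weighted_conformal_coverage_general Q P hac w hwmeas hw0 hwrnd μ n Zi hZmeas hindep hlawQ hlawP V
    hV α hα
end
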